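/- arXiv:1101.2236 — 6 statements merged into one kernel-verified Lean document; each statement's English description precedes it below -/
import Mathlib

section
/- If γ* = log Φ where Φ(t,x) = Σ_{d≥0} (∏_{i=1}^d 1/(1−it)) · ((-1)^d/d!) · (x/t)^d, then γ* satisfies the PDE −t²x·γ*_{xx} = t²x·(γ*_x)² + t²·γ*_x − t·γ*_x − 1, where subscripts denote partial derivatives in x. -/
open PowerSeries

/-- `Φ(t,x) = Σ_{d≥0} (∏_{i=1}^d 1/(1-it)) · ((-1)^d/d!) · (x/t)^d` over `ℚ(t)`. -/
noncomputable def phi : PowerSeries (RatFunc ℚ) :=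
  PowerSeries.mk fun d =>
    (∏ i ∈ Finset.range d, (1 - ((i : RatFunc ℚ) + 1) * RatFunc.X)⁻¹) *
      ((-1) ^ d / ((d.factorial : RatFunc ℚ) * RatFunc.X ^ d))

/-- `log(1+x) = Σ_{n≥1} (-1)^{n-1} x^n / n`. -/
noncomputable def logOneAdd : PowerSeries (RatFunc ℚ) :=
  PowerSeries.mk fun n => if n = 0 then 0 else (-1) ^ (n - 1) / (n : RatFunc ℚ)

/-- Composition `f ∘ g` of formal power series (the correct composition whenever the
constant term of `g` vanishes). -/
noncomputable def comp (f g : PowerSeries (RatFunc ℚ)) : PowerSeries (RatFunc ℚ) :=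
  PowerSeries.mk fun n =>
    ∑ k ∈ Finset.range (n + 1),
      PowerSeries.coeff k f * PowerSeries.coeff n (g ^ k)

/-- `γ* = log Φ`. -/
noncomputable def gammaStar : PowerSeries (RatFunc ℚ) := comp logOneAdd (phi - 1)

/-! Φ solves the linear equation `−t²x·Φ'' = (t² − t)·Φ' − Φ`, which coefficientwise is the
recurrence `a_d = −(d+1)t(1 − (d+1)t)·a_{d+1}` of its coefficients. Since `Φ·γ*' = Φ'`, the PDE
is the Riccati equation `a (y' + y²) = b y + c` satisfied by the logarithmic derivative
`y = f'/f` of any solution of `a f'' = b f' + c f`. -/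

theorem Derivation.riccati_of_linear {k R : Type*} [CommRing k] [CommRing R] [IsDomain R]
    [Algebra k R] (D : Derivation k R R) {f y a b c : R} (hf : f ≠ 0) (hy : f * y = D f)
    (hode : a * D (D f) = b * D f + c * f) :
    a * (D y + y ^ 2) = b * y + c := by
  have hD := congrArg D hy
  rw [Derivation.leibniz, smul_eq_mul, smul_eq_mul] at hD
  refine mul_left_cancel₀ hf ?_
  linear_combination a * hD + hode + (a * y - b) * hy

namespace PowerSeries

variable {A : Type*} [CommRing A] [Algebra ℚ A]

theorem one_add_X_mul_derivative_log : (1 + X) * d⁄dX A (log A) = 1 := by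
  ext n
  rw [deriv_log, add_mul, one_mul, map_add]
  cases n with
  | zero => simp
  | succ n => simp [coeff_succ_X_mul, pow_succ]

theorem mul_derivative_logOf {f : A⟦X⟧} (hf : constantCoeff f = 1) :
    f * d⁄dX A (logOf f) = d⁄dX A f := by
  have hsubst : HasSubst (f - 1 : A⟦X⟧) := HasSubst.of_constantCoeff_zero' (by simp [hf])
  have hinv : f * (d⁄dX A (log A)).subst (f - 1) = 1 := by
    have := congrArg (substAlgHom (R := A) hsubst) one_add_X_mul_derivative_log
    rwa [map_mul, map_add, map_one, coe_substAlgHom, subst_X hsubst,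
      add_sub_cancel] at this
  rw [logOf_eq, derivative_subst hsubst, ← mul_assoc, hinv, one_mul, map_sub, derivative_one,
    sub_zero]

end PowerSeries

theorem one_sub_mul_X_ne_zero (c : ℚ) : (1 - (c : RatFunc ℚ) * RatFunc.X) ≠ 0 := by
  have : (1 - (c : RatFunc ℚ) * RatFunc.X) =
      algebraMap (Polynomial ℚ) (RatFunc ℚ) (1 - Polynomial.C c * Polynomial.X) := by
    simp [RatFunc.algebraMap_C]
  rw [this]
  exact RatFunc.algebraMap_ne_zero fun h => by
    simpa using congrArg (Polynomial.coeff · 0) h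

theorem coeff_phi_eq_mul_coeff_succ (n : ℕ) :
    coeff n phi = -(((n : RatFunc ℚ) + 1) * RatFunc.X * (1 - ((n : RatFunc ℚ) + 1) * RatFunc.X))
      * coeff (n + 1) phi := by
  have hX : (RatFunc.X : RatFunc ℚ) ≠ 0 := RatFunc.X_ne_zero
  have hn : ((n : RatFunc ℚ) + 1) ≠ 0 := Nat.cast_add_one_ne_zero n
  have hd : 1 - ((n : RatFunc ℚ) + 1) * RatFunc.X ≠ 0 := by
    exact_mod_cast one_sub_mul_X_ne_zero ((n : ℚ) + 1)
  have hf : (n.factorial : RatFunc ℚ) ≠ 0 := Nat.cast_ne_zero.2 n.factorial_ne_zero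
  simp only [phi, coeff_mk, Finset.prod_range_succ, Nat.factorial_succ]
  generalize ∏ i ∈ Finset.range n, (1 - ((i : RatFunc ℚ) + 1) * RatFunc.X)⁻¹ = P
  push_cast
  field_simp
  ring

theorem constantCoeff_phi : constantCoeff phi = 1 := by
  simp [← coeff_zero_eq_constantCoeff_apply, phi]

theorem phi_ode :
    -(C (RatFunc.X : RatFunc ℚ)) ^ 2 * X * d⁄dX (RatFunc ℚ) (d⁄dX (RatFunc ℚ) phi) =
      (C RatFunc.X ^ 2 - C RatFunc.X) * d⁄dX (RatFunc ℚ) phi + (-1) * phi := by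
  have hL : -(C (RatFunc.X : RatFunc ℚ)) ^ 2 * X * d⁄dX (RatFunc ℚ) (d⁄dX (RatFunc ℚ) phi) =
      C (-RatFunc.X ^ 2) * (X * d⁄dX (RatFunc ℚ) (d⁄dX (RatFunc ℚ) phi)) := by
    rw [map_neg, map_pow]; ring
  have hR : (C (RatFunc.X : RatFunc ℚ) ^ 2 - C RatFunc.X) * d⁄dX (RatFunc ℚ) phi + (-1) * phi =
      C (RatFunc.X ^ 2 - RatFunc.X) * d⁄dX (RatFunc ℚ) phi - phi := by
    rw [map_sub, map_pow]; ring
  rw [hL, hR]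
  ext n
  have h := coeff_phi_eq_mul_coeff_succ n
  rw [coeff_C_mul, map_sub, coeff_C_mul, coeff_derivative]
  cases n with
  | zero =>
    rw [coeff_zero_X_mul]
    push_cast at h ⊢
    linear_combination h
  | succ n =>
    rw [coeff_succ_X_mul, coeff_derivative, coeff_derivative]
    push_cast at h ⊢
    linear_combination h

theorem comp_eq_subst (f : PowerSeries (RatFunc ℚ)) {g : PowerSeries (RatFunc ℚ)}
    (hg : constantCoeff g = 0) : comp f g = f.subst g := by
  ext n
  rw [coeff_subst' (HasSubst.of_constantCoeff_zero' hg),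
    finsum_eq_sum_of_support_subset (s := Finset.range (n + 1))]
  · simp [comp, smul_eq_mul]
  · intro d hd
    by_contra hdn
    refine hd (smul_eq_zero_of_right _ (coeff_of_lt_order _ ?_))
    simp only [Finset.coe_range, Set.mem_Iio, not_lt] at hdn
    exact lt_of_lt_of_le (by exact_mod_cast hdn) (le_order_pow_of_constantCoeff_eq_zero d hg)

theorem logOneAdd_eq_log : logOneAdd = log (RatFunc ℚ) := by
  ext (_ | n)
  · simp [logOneAdd]
  · simp [logOneAdd, pow_succ]

theorem gammaStar_eq_logOf : gammaStar = logOf phi := by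
  rw [gammaStar, comp_eq_subst _ (by simp [constantCoeff_phi]), logOneAdd_eq_log, logOf_eq]

/-- `−t²x·γ*_{xx} = t²x·(γ*_x)² + t²·γ*_x − t·γ*_x − 1`. -/
theorem gammaStar_pde :
    -(PowerSeries.C (RatFunc.X : RatFunc ℚ)) ^ 2 * PowerSeries.X *
        PowerSeries.derivative (RatFunc ℚ) (PowerSeries.derivative (RatFunc ℚ) gammaStar) =
      (PowerSeries.C (RatFunc.X : RatFunc ℚ)) ^ 2 * PowerSeries.X *
          (PowerSeries.derivative (RatFunc ℚ) gammaStar) ^ 2 +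
        (PowerSeries.C (RatFunc.X : RatFunc ℚ)) ^ 2 *
          PowerSeries.derivative (RatFunc ℚ) gammaStar -
        PowerSeries.C (RatFunc.X : RatFunc ℚ) *
          PowerSeries.derivative (RatFunc ℚ) gammaStar - 1 := by
  have hphi : phi ≠ 0 := fun h => by simpa [h] using constantCoeff_phi
  have h := (derivative (RatFunc ℚ)).riccati_of_linear hphi
    (mul_derivative_logOf constantCoeff_phi) phi_ode
  rw [gammaStar_eq_logOf]
  linear_combination h
end

section
/- For P(t,x) ∈ ℚ[[t,x]], let P̂(u,y) be obtained from the change of variables u = t/√(1+4x), y = −x/(1+4x). Then for all integers r ≥ 0 and d ≥ 0, the coefficient of t^r x^d in P equals (−1)^d times the coefficient of u^r y^d in (1+4y)^{(r+2d−2)/2} · P̂(u,y). -/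
open MvPowerSeries

/-!
Everything hinges on the fact that `Ty` and `Sy`, being powers of `1 + 4y`, involve `y` only: a
square root of `1 + 4y` with constant term `1` is unique (since `2` is invertible), and setting
`t = 0` in it gives another one. The substituted monomial `t^e₀ x^e₁` is
`(-1)^e₁ u^e₀ y^e₁ (1 + 4y)^(-(e₀ + 2e₁)/2)`, so its contribution to the coefficient of `u^r y^d`
in `(1 + 4y)^((r + 2d - 2)/2) · P̂` vanishes unless `e₀ = r`, and is then `(-1)^e₁` times the
coefficient of `y^(d - e₁)` in `(1 + 4y)^(d - e₁ - 1)`. For `e₁ < d` this is a polynomial of degree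
`d - e₁ - 1`, and for `e₁ = d` it is `(1 + 4y)⁻¹`, with constant term `1`.
-/

/-- Substitution `P(a₀, a₁)` for a two-variable power series `P`, computed by the
truncated sum (the correct substitution whenever every monomial of `aᵢ` contains the
`i`-th variable, as is the case below). -/
noncomputable def subst2 (a0 a1 P : MvPowerSeries (Fin 2) ℚ) : MvPowerSeries (Fin 2) ℚ :=
  fun m =>
    ∑ e0 ∈ Finset.range (m 0 + 1), ∑ e1 ∈ Finset.range (m 1 + 1),
      MvPowerSeries.coeff (Finsupp.single 0 e0 + Finsupp.single 1 e1) P *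
        MvPowerSeries.coeff m (a0 ^ e0 * a1 ^ e1)

namespace MvPowerSeries

variable {σ R : Type*}

section CommSemiring

variable [CommSemiring R]

def evalXZeroFun (i : σ) (f : MvPowerSeries σ R) : MvPowerSeries σ R :=
  fun m => if m i = 0 then coeff m f else 0

theorem coeff_evalXZeroFun (i : σ) (m : σ →₀ ℕ) (f : MvPowerSeries σ R) :
    coeff m (evalXZeroFun i f) = if m i = 0 then coeff m f else 0 := rfl

noncomputable def evalXZero (i : σ) : MvPowerSeries σ R →+* MvPowerSeries σ R where
  toFun := evalXZeroFun i
  map_zero' := by ext m; simp [coeff_evalXZeroFun]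
  map_one' := by
    classical
    ext m
    simp only [coeff_evalXZeroFun, coeff_one]
    split_ifs <;> simp_all
  map_add' f g := by
    ext m
    simp only [coeff_evalXZeroFun, map_add]
    split_ifs <;> simp
  map_mul' f g := by
    classical
    ext m
    change coeff m (evalXZeroFun i (f * g)) = coeff m (evalXZeroFun i f * evalXZeroFun i g)
    rw [coeff_evalXZeroFun, coeff_mul, coeff_mul]
    split_ifs with hm
    · refine Finset.sum_congr rfl fun pq hpq => ?_
      have h := congrArg (· i) (Finset.HasAntidiagonal.mem_antidiagonal.mp hpq)
      simp only [Finsupp.add_apply, hm, Nat.add_eq_zero_iff] at h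
      simp [coeff_evalXZeroFun, h]
    · refine (Finset.sum_eq_zero fun pq hpq => ?_).symm
      have h := congrArg (· i) (Finset.HasAntidiagonal.mem_antidiagonal.mp hpq)
      simp only [Finsupp.add_apply] at h
      by_cases hp : pq.1 i = 0
      · simp [coeff_evalXZeroFun, show pq.2 i ≠ 0 by omega]
      · simp [coeff_evalXZeroFun, hp]

theorem coeff_evalXZero (i : σ) (m : σ →₀ ℕ) (f : MvPowerSeries σ R) :
    coeff m (evalXZero i f) = if m i = 0 then coeff m f else 0 := rfl

theorem constantCoeff_evalXZero (i : σ) (f : MvPowerSeries σ R) :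
    constantCoeff (evalXZero i f) = constantCoeff f := by
  rw [← coeff_zero_eq_constantCoeff_apply, coeff_evalXZero, Finsupp.coe_zero, Pi.zero_apply,
    if_pos rfl, coeff_zero_eq_constantCoeff_apply]

theorem evalXZero_monomial {i : σ} {n : σ →₀ ℕ} (hn : n i = 0) (a : R) :
    evalXZero i (monomial n a) = monomial n a := by
  classical
  ext m
  rw [coeff_evalXZero, coeff_monomial]
  split_ifs <;> simp_all

theorem coeff_eq_zero_of_evalXZero_eq {i : σ} {f : MvPowerSeries σ R} (hf : evalXZero i f = f)
    {m : σ →₀ ℕ} (hm : m i ≠ 0) : coeff m f = 0 := by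
  rw [← hf, coeff_evalXZero, if_neg hm]

theorem coeff_single_one_add_monomial_pow_eq_zero (i : σ) (a : R) {j k : ℕ} (h : j < k) :
    coeff (Finsupp.single i k) ((1 + monomial (Finsupp.single i 1) a) ^ j) = 0 := by
  have hcoe : (1 + monomial (Finsupp.single i 1) a : MvPowerSeries σ R) ^ j =
      ((1 + MvPolynomial.monomial (Finsupp.single i 1) a) ^ j : MvPolynomial σ R) := by
    push_cast; rfl
  have hdeg :
      (1 + MvPolynomial.monomial (Finsupp.single i 1) a : MvPolynomial σ R).totalDegree ≤ 1 :=
    (MvPolynomial.totalDegree_add _ _).trans <| max_le (by simp) <|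
      (MvPolynomial.totalDegree_monomial_le _ _).trans (by simp)
  rw [hcoe, MvPolynomial.coeff_coe]
  refine MvPolynomial.coeff_eq_zero_of_totalDegree_lt ?_
  calc _ ≤ j * 1 := (MvPolynomial.totalDegree_pow _ _).trans (Nat.mul_le_mul_left j hdeg)
    _ < (Finsupp.single i k).degree := by simpa using h

theorem coeff_mul_congr_right {f g g' : MvPowerSeries σ R} {n : σ →₀ ℕ}
    (h : ∀ q ≤ n, coeff q g = coeff q g') : coeff n (f * g) = coeff n (f * g') := by
  classical
  rw [coeff_mul, coeff_mul]
  refine Finset.sum_congr rfl fun pq hpq => ?_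
  rw [h pq.2 (le_of_add_le_right (Finset.HasAntidiagonal.mem_antidiagonal.mp hpq).le)]

end CommSemiring

theorem eq_of_sq_eq_sq_of_constantCoeff_eq [CommRing R] {s t : MvPowerSeries σ R}
    (h : s ^ 2 = t ^ 2) (hc : constantCoeff s = constantCoeff t)
    (hu : IsUnit (2 * constantCoeff t)) : s = t := by
  have hunit : IsUnit (s + t) :=
    isUnit_iff_constantCoeff.2 (by rwa [map_add, hc, ← two_mul])
  rw [← sub_eq_zero, ← hunit.mul_left_eq_zero, mul_comm, ← sq_sub_sq, h, sub_self]

end MvPowerSeries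

/-- `zpowSubTwo t s n` is `t ^ ((n : ℤ) - 2)` when `s = t⁻¹`. -/
def zpowSubTwo {M : Type*} [Monoid M] (t s : M) (n : ℕ) : M :=
  if 2 ≤ n then t ^ (n - 2) else s ^ (2 - n)

section zpowSubTwo

variable {M : Type*}

theorem map_zpowSubTwo {N F : Type*} [Monoid M] [Monoid N] [FunLike F M N] [MonoidHomClass F M N]
    (f : F) (t s : M) (n : ℕ) : f (zpowSubTwo t s n) = zpowSubTwo (f t) (f s) n := by
  unfold zpowSubTwo
  split_ifs <;> exact map_pow f _ _

variable [CommMonoid M] {s t : M}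

theorem zpowSubTwo_mul_pow_self (h : s * t = 1) (n : ℕ) : zpowSubTwo t s n * s ^ n = s ^ 2 := by
  unfold zpowSubTwo
  split_ifs with hn
  · obtain ⟨k, rfl⟩ := Nat.exists_eq_add_of_le hn
    rw [Nat.add_sub_cancel_left, pow_add s 2, mul_left_comm, ← mul_pow, mul_comm t, h, one_pow,
      mul_one]
  · rw [← pow_add, Nat.sub_add_cancel (by omega)]

theorem zpowSubTwo_add_mul_pow (h : s * t = 1) (a b : ℕ) :
    zpowSubTwo t s (a + b + 2) * s ^ a = t ^ b := by
  rw [zpowSubTwo, if_pos (by omega), show a + b + 2 - 2 = b + a by omega, pow_add, mul_assoc,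
    ← mul_pow, mul_comm t, h, one_pow, mul_one]

end zpowSubTwo

noncomputable def bideg (a b : ℕ) : Fin 2 →₀ ℕ := Finsupp.single 0 a + Finsupp.single 1 b

@[simp] theorem bideg_apply_zero (a b : ℕ) : bideg a b 0 = a := by simp [bideg]

@[simp] theorem bideg_apply_one (a b : ℕ) : bideg a b 1 = b := by simp [bideg]

theorem bideg_le_iff {a b : ℕ} {m : Fin 2 →₀ ℕ} : bideg a b ≤ m ↔ a ≤ m 0 ∧ b ≤ m 1 := by
  simp [Finsupp.le_def, Fin.forall_fin_two]

theorem bideg_sub_bideg (a b c d : ℕ) : bideg a b - bideg c d = bideg (a - c) (b - d) := by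
  ext i; fin_cases i <;> simp

theorem bideg_zero_left (b : ℕ) : bideg 0 b = Finsupp.single 1 b := by simp [bideg]

section TwoVariables

variable {R : Type*} [CommSemiring R]

theorem X_zero_pow_mul_X_one_pow (a b : ℕ) :
    (X 0 ^ a * X 1 ^ b : MvPowerSeries (Fin 2) R) = monomial (bideg a b) 1 := by
  rw [X_pow_eq, X_pow_eq, monomial_mul_monomial, mul_one, bideg]

theorem coeff_pow_mul_pow_eq_zero_of_X_dvd {a0 a1 : MvPowerSeries (Fin 2) R} (h0 : X 0 ∣ a0)
    (h1 : X 1 ∣ a1) {q : Fin 2 →₀ ℕ} {e0 e1 : ℕ} (he : q 0 < e0 ∨ q 1 < e1) :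
    coeff q (a0 ^ e0 * a1 ^ e1) = 0 := by
  obtain ⟨b0, rfl⟩ := h0
  obtain ⟨b1, rfl⟩ := h1
  rw [mul_pow, mul_pow, mul_mul_mul_comm, X_zero_pow_mul_X_one_pow, coeff_monomial_mul,
    if_neg (by rw [bideg_le_iff]; omega)]

end TwoVariables

theorem coeff_mul_substMonomial {R : Type*} [CommRing R] (G S : MvPowerSeries (Fin 2) R)
    (n : Fin 2 →₀ ℕ) (e0 e1 : ℕ) :
    coeff n (G * ((X 0 * S) ^ e0 * (-X 1 * S ^ 2) ^ e1)) =
      if bideg e0 e1 ≤ n then (-1) ^ e1 * coeff (n - bideg e0 e1) (G * S ^ (e0 + 2 * e1))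
      else 0 := by
  have : G * ((X 0 * S) ^ e0 * (-X 1 * S ^ 2) ^ e1) =
      monomial (bideg e0 e1) ((-1) ^ e1) * (G * S ^ (e0 + 2 * e1)) :=
    calc _ = C ((-1) ^ e1) * (X 0 ^ e0 * X 1 ^ e1) * (G * S ^ (e0 + 2 * e1)) := by
          rw [map_pow, map_neg, map_one]; ring
      _ = _ := by
          rw [X_zero_pow_mul_X_one_pow, ← monomial_zero_eq_C_apply, monomial_mul_monomial,
            zero_add, mul_one]
  rw [this, coeff_monomial_mul]

theorem coeff_subst2_eq_sum {a0 a1 : MvPowerSeries (Fin 2) ℚ} (h0 : X 0 ∣ a0) (h1 : X 1 ∣ a1)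
    (P : MvPowerSeries (Fin 2) ℚ) {q : Fin 2 →₀ ℕ} {r d : ℕ} (hq : q ≤ bideg r d) :
    coeff q (subst2 a0 a1 P) = ∑ e0 ∈ Finset.range (r + 1), ∑ e1 ∈ Finset.range (d + 1),
      coeff (bideg e0 e1) P * coeff q (a0 ^ e0 * a1 ^ e1) := by
  obtain ⟨hr, hd⟩ : q 0 ≤ r ∧ q 1 ≤ d :=
    ⟨by simpa using Finsupp.le_def.1 hq 0, by simpa using Finsupp.le_def.1 hq 1⟩
  rw [coeff_apply, subst2]
  rw [← Finset.sum_subset (Finset.range_subset_range.mpr (by omega : q 0 + 1 ≤ r + 1))]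
  · refine Finset.sum_congr rfl fun e0 _ => Finset.sum_subset
      (Finset.range_subset_range.mpr (by omega)) fun e1 _ he1 => ?_
    rw [coeff_pow_mul_pow_eq_zero_of_X_dvd h0 h1 (Or.inr (by simpa using he1)), mul_zero]
  · refine fun e0 _ he0 => Finset.sum_eq_zero fun e1 _ => ?_
    rw [coeff_pow_mul_pow_eq_zero_of_X_dvd h0 h1 (Or.inl (by simpa using he0)), mul_zero]

section SquareRoot

variable {T S : MvPowerSeries (Fin 2) ℚ}

theorem four_mul_X_one :
    (4 * X 1 : MvPowerSeries (Fin 2) ℚ) = monomial (Finsupp.single 1 1) 4 := by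
  rw [X, ← map_ofNat (C (σ := Fin 2) (R := ℚ)) 4, ← monomial_zero_eq_C_apply,
    monomial_mul_monomial, zero_add, mul_one]

theorem evalXZero_sqrt (hT0 : constantCoeff T = 1) (hT : T ^ 2 = 1 + 4 * X 1) :
    evalXZero 0 T = T := by
  refine eq_of_sq_eq_sq_of_constantCoeff_eq ?_ (constantCoeff_evalXZero 0 T)
    (by rw [hT0]; norm_num)
  rw [← map_pow, hT, map_add, map_one, four_mul_X_one, evalXZero_monomial (by simp)]

theorem evalXZero_inv_sqrt (hT0 : constantCoeff T = 1) (hT : T ^ 2 = 1 + 4 * X 1)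
    (hST : S * T = 1) : evalXZero 0 S = S :=
  left_inv_eq_right_inv (a := T) (by rw [← evalXZero_sqrt hT0 hT, ← map_mul, hST, map_one])
    (by rw [mul_comm, hST])

theorem coeff_zpowSubTwo_mul_pow (hT0 : constantCoeff T = 1) (hT : T ^ 2 = 1 + 4 * X 1)
    (hST : S * T = 1) (r : ℕ) {d e : ℕ} (he : e ≤ d) :
    coeff (Finsupp.single 1 (d - e)) (zpowSubTwo T S (r + 2 * d) * S ^ (r + 2 * e)) =
      if e = d then 1 else 0 := by
  rcases he.eq_or_lt with rfl | hlt
  · have hS0 : constantCoeff S = 1 := by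
      simpa [hT0] using congrArg constantCoeff hST
    rw [if_pos rfl, Nat.sub_self, Finsupp.single_zero, zpowSubTwo_mul_pow_self hST,
      coeff_zero_eq_constantCoeff_apply, map_pow, hS0, one_pow]
  · obtain ⟨k, rfl⟩ : ∃ k, d = e + k + 1 := ⟨d - e - 1, by omega⟩
    rw [if_neg (by omega), show r + 2 * (e + k + 1) = r + 2 * e + 2 * k + 2 by ring,
      zpowSubTwo_add_mul_pow hST, pow_mul, hT, four_mul_X_one,
      coeff_single_one_add_monomial_pow_eq_zero _ _ (by omega)]

theorem coeff_zpowSubTwo_mul_substMonomial (hT0 : constantCoeff T = 1)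
    (hT : T ^ 2 = 1 + 4 * X 1) (hST : S * T = 1) {r d e0 e1 : ℕ} (he0 : e0 ≤ r) (he1 : e1 ≤ d) :
    coeff (bideg r d) (zpowSubTwo T S (r + 2 * d) * ((X 0 * S) ^ e0 * (-X 1 * S ^ 2) ^ e1)) =
      if e0 = r ∧ e1 = d then (-1) ^ d else 0 := by
  rw [coeff_mul_substMonomial, if_pos (by simp [bideg_le_iff, he0, he1]), bideg_sub_bideg]
  rcases he0.eq_or_lt with rfl | hlt
  · rw [Nat.sub_self, bideg_zero_left, coeff_zpowSubTwo_mul_pow hT0 hT hST _ he1]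
    split_ifs <;> simp_all
  · have hfix : evalXZero 0 (zpowSubTwo T S (r + 2 * d) * S ^ (e0 + 2 * e1)) =
        zpowSubTwo T S (r + 2 * d) * S ^ (e0 + 2 * e1) := by
      rw [map_mul, map_pow, map_zpowSubTwo, evalXZero_sqrt hT0 hT, evalXZero_inv_sqrt hT0 hT hST]
    rw [coeff_eq_zero_of_evalXZero_eq hfix (by rw [bideg_apply_zero]; omega), mul_zero,
      if_neg (by omega)]

end SquareRoot

/-- `Ty = (1+4y)^{1/2}` and `Sy = (1+4y)^{-1/2}`, so that `u/√(1+4y) = u·Sy`,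
`−y/(1+4y) = −y·Sy²`, and `(1+4y)^{(r+2d−2)/2}` is `Ty^(r+2d−2)` resp. `Sy^(2−(r+2d))`. -/
theorem ionel_coeff_relation (P : MvPowerSeries (Fin 2) ℚ)
    (Ty Sy : MvPowerSeries (Fin 2) ℚ)
    (hTy0 : MvPowerSeries.constantCoeff Ty = 1)
    (hTy : Ty ^ 2 = 1 + 4 * MvPowerSeries.X 1)
    (hSy : Sy * Ty = 1)
    (r d : ℕ) :
    MvPowerSeries.coeff (Finsupp.single 0 r + Finsupp.single 1 d) P =
      (-1) ^ d *
        MvPowerSeries.coeff (Finsupp.single 0 r + Finsupp.single 1 d)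
          ((if 2 ≤ r + 2 * d then Ty ^ (r + 2 * d - 2) else Sy ^ (2 - (r + 2 * d))) *
            subst2 (MvPowerSeries.X 0 * Sy) (-(MvPowerSeries.X 1) * Sy ^ 2) P) := by
  have htrunc : ∀ q ≤ bideg r d, coeff q (subst2 (X 0 * Sy) (-X 1 * Sy ^ 2) P) =
      coeff q (∑ e0 ∈ Finset.range (r + 1), ∑ e1 ∈ Finset.range (d + 1),
        C (coeff (bideg e0 e1) P) * ((X 0 * Sy) ^ e0 * (-X 1 * Sy ^ 2) ^ e1)) := by
    intro q hq
    simp only [map_sum, coeff_C_mul]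
    exact coeff_subst2_eq_sum (dvd_mul_right _ _) ⟨-Sy ^ 2, by ring⟩ P hq
  have hcoeff : coeff (bideg r d) (zpowSubTwo Ty Sy (r + 2 * d) *
      subst2 (X 0 * Sy) (-X 1 * Sy ^ 2) P) = (-1) ^ d * coeff (bideg r d) P := by
    rw [coeff_mul_congr_right htrunc]
    simp only [Finset.mul_sum, map_sum, mul_left_comm _ (C _), coeff_C_mul]
    rw [Finset.sum_congr rfl fun e0 he0 => Finset.sum_congr rfl fun e1 he1 => by
      rw [coeff_zpowSubTwo_mul_substMonomial hTy0 hTy hSy (Finset.mem_range_succ_iff.1 he0)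
        (Finset.mem_range_succ_iff.1 he1)]]
    simp [ite_and, mul_comm]
  change _ = _ * coeff (bideg r d) (zpowSubTwo Ty Sy (r + 2 * d) * _)
  rw [hcoeff, ← mul_assoc, ← pow_add, Even.neg_one_pow ⟨d, rfl⟩, one_mul, bideg]
end

section
/- Let A(z) = Σ_{i≥0} ((6i)!/((3i)!(2i)!)) · (z/72)^i. Then A satisfies the hypergeometric differential equation 36z²·A'' + (72z − 6)·A' + 5A = 0. -/
/-!
On `z^n` the operator `α z² f'' + (β z − γ) f' + δ f` acts by
`(α n(n−1) + β n + δ) aₙ − γ (n+1) aₙ₊₁`, so the equation is the first-order recurrence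
`6(n+1) aₙ₊₁ = (36n² + 36n + 5) aₙ = (6n+1)(6n+5) aₙ`. This is the ratio of consecutive
coefficients of `A`: in `(6n+6)!/(6n)!` the even factors and `6n+3` cancel against
`(3n+3)!/(3n)!` and `(2n+1)`, leaving `(6n+1)(6n+5) · 24 / ((2n+2) · 72)`.
-/

open PowerSeries

/-- `A(z) = Σ_{i≥0} ((6i)!/((3i)!(2i)!)) (z/72)^i`. -/
noncomputable def hgA : PowerSeries ℚ :=
  PowerSeries.mk fun i =>
    ((6 * i).factorial : ℚ) / (((3 * i).factorial : ℚ) * ((2 * i).factorial : ℚ)) / 72 ^ i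

namespace PowerSeries

variable {R : Type*} [CommRing R]

theorem coeff_X_mul_derivative (f : R⟦X⟧) (n : ℕ) :
    coeff n (X * derivative R f) = n * coeff n f := by
  rcases n with _ | n
  · simp
  · rw [coeff_succ_X_mul, coeff_derivative, mul_comm, Nat.cast_succ]

theorem coeff_X_sq_mul_derivative_derivative (f : R⟦X⟧) (n : ℕ) :
    coeff n (X ^ 2 * derivative R (derivative R f)) = n * (n - 1) * coeff n f := by
  rw [sq, mul_assoc]
  rcases n with _ | _ | n
  · simp
  · simp
  · rw [coeff_succ_X_mul, coeff_succ_X_mul, coeff_derivative, coeff_derivative]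
    push_cast
    ring

theorem coeff_secondOrderOperator (α β γ δ : R) (f : R⟦X⟧) (n : ℕ) :
    coeff n (C α * X ^ 2 * derivative R (derivative R f) + (C β * X - C γ) * derivative R f
        + C δ * f) =
      (α * n * (n - 1) + β * n + δ) * coeff n f - γ * (n + 1) * coeff (n + 1) f := by
  rw [mul_assoc, sub_mul, mul_assoc, mul_assoc]
  simp only [map_add, map_sub, coeff_C_mul, coeff_X_mul_derivative,
    coeff_X_sq_mul_derivative_derivative, coeff_derivative]
  ring

theorem secondOrderOperator_eq_zero_iff (α β γ δ : R) (f : R⟦X⟧) :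
    C α * X ^ 2 * derivative R (derivative R f) + (C β * X - C γ) * derivative R f + C δ * f = 0 ↔
      ∀ n : ℕ, γ * (n + 1) * coeff (n + 1) f = (α * n * (n - 1) + β * n + δ) * coeff n f := by
  simp only [PowerSeries.ext_iff, coeff_secondOrderOperator, map_zero, sub_eq_zero]
  exact forall_congr' fun _ => eq_comm

end PowerSeries

theorem coeff_hgA_succ (n : ℕ) :
    6 * (n + 1) * coeff (n + 1) hgA = (6 * n + 1) * (6 * n + 5) * coeff n hgA := by
  simp only [hgA, coeff_mk, show 6 * (n + 1) = 6 * n + 6 by ring,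
    show 3 * (n + 1) = 3 * n + 3 by ring, show 2 * (n + 1) = 2 * n + 2 by ring,
    Nat.factorial_succ, Nat.factorial]
  push_cast
  field_simp
  ring

/-- `36z²·A'' + (72z − 6)·A' + 5A = 0`. -/
theorem hgA_ode :
    36 * PowerSeries.X ^ 2 *
        PowerSeries.derivative ℚ (PowerSeries.derivative ℚ hgA) +
      (72 * PowerSeries.X - 6) * PowerSeries.derivative ℚ hgA + 5 * hgA = 0 := by
  have h := (secondOrderOperator_eq_zero_iff (36 : ℚ) 72 6 5 hgA).2 fun n => by
    rw [coeff_hgA_succ]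
    ring
  simpa only [map_ofNat] using h
end

section
/- Let C be a formal power series satisfying 12z²C' = 1 + 4zC − C², and define C_1 = C, C_{i+1} = 12z²C_i' − 4izC_i. Then for every n ≥ 1, C_n is a polynomial in C with coefficients in ℚ[z]: there exist polynomials f_{n,j} ∈ ℚ[z] with C_n = Σ_{j=0}^n f_{n,j}·C^j. -/
/-!
The `ℚ[z]`-span of `1, C, …, Cⁿ` is stable under multiplication by `C`, and the Riccati equation
says that `12z²C'` lies in the span of `1, C, C²`. By the Leibniz rule the operator `12z² d/dz`
therefore maps the span of `1, …, Cⁿ` into the span of `1, …, Cⁿ⁺¹`, and the recursion for `Cₙ`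
raises the degree in `C` by at most one.
-/

open PowerSeries

namespace PowerSeries

open Polynomial

variable {R : Type*} [CommSemiring R]

theorem polynomial_smul_eq_coe_mul (p : R[X]) (P : R⟦X⟧) : p • P = (p : R⟦X⟧) * P := by
  simp [Algebra.smul_def, algebraMap_apply']

theorem algebraMap_polynomial_X : algebraMap R[X] R⟦X⟧ Polynomial.X = X := by
  simp [algebraMap_apply']

noncomputable def powersSpan (C : R⟦X⟧) (n : ℕ) : Submodule R[X] R⟦X⟧ :=
  Submodule.span R[X] ((C ^ ·) '' ↑(Finset.range (n + 1)))

variable {C P : R⟦X⟧} {n : ℕ}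

theorem mem_powersSpan_iff :
    P ∈ powersSpan C n ↔ ∃ f : ℕ → R[X], P = ∑ j ∈ Finset.range (n + 1), (f j : R⟦X⟧) * C ^ j := by
  simp only [powersSpan, Submodule.mem_span_image_finset_iff_exists_fun',
    polynomial_smul_eq_coe_mul, eq_comm]

theorem pow_mem_powersSpan {j : ℕ} (hj : j ≤ n) : C ^ j ∈ powersSpan C n :=
  Submodule.subset_span ⟨j, by simpa [Nat.lt_succ_iff] using hj, rfl⟩

theorem powersSpan_mono (C : R⟦X⟧) : Monotone (powersSpan C) := fun _ _ hmn =>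
  Submodule.span_mono (Set.image_mono (by simpa using hmn))

theorem pow_mul_mem_powersSpan (k : ℕ) (hP : P ∈ powersSpan C n) :
    C ^ k * P ∈ powersSpan C (n + k) := by
  induction hP using Submodule.span_induction with
  | mem _ h =>
    obtain ⟨j, hj, rfl⟩ := h
    rw [← pow_add]
    exact pow_mem_powersSpan (by simp at hj; omega)
  | zero => simp
  | add _ _ _ _ hP hQ => rw [mul_add]; exact add_mem hP hQ
  | smul p _ _ hP => rw [mul_smul_comm]; exact Submodule.smul_mem _ p hP

theorem smul_derivative_mem_powersSpan {q : R[X]} (hC : q • d⁄dX R C ∈ powersSpan C 2)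
    (hP : P ∈ powersSpan C n) : q • d⁄dX R P ∈ powersSpan C (n + 1) := by
  induction hP using Submodule.span_induction with
  | mem _ h =>
    obtain ⟨j, hj, rfl⟩ := h
    rcases j with _ | k
    · simp
    · have hk : k + 2 ≤ n + 1 := by simp at hj; omega
      have hpow : q • d⁄dX R (C ^ (k + 1)) = (k + 1) • (C ^ k * q • d⁄dX R C) := by
        rw [Derivation.leibniz_pow, Nat.add_sub_cancel, smul_eq_mul, smul_comm, mul_smul_comm]
      rw [hpow]
      refine nsmul_mem (powersSpan_mono C hk ?_) _
      simpa [add_comm] using pow_mul_mem_powersSpan k hC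
  | zero => simp
  | add _ _ _ _ hP hQ => rw [map_add, smul_add]; exact add_mem hP hQ
  | smul p P hP ih =>
    have hleibniz : q • d⁄dX R (p • P) = p • q • d⁄dX R P + (q * Polynomial.derivative p) • P := by
      simp only [polynomial_smul_eq_coe_mul, Derivation.leibniz, derivative_coe, smul_eq_mul,
        Polynomial.coe_mul]
      ring
    rw [hleibniz]
    exact add_mem (Submodule.smul_mem _ p ih)
      (Submodule.smul_mem _ _ (powersSpan_mono C n.le_succ hP))

end PowerSeries

open Polynomial in
/-- If `C` satisfies the Riccati equation `12z²C' = 1 + 4zC − C²` and the `Cₙ` are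
defined by `C₁ = C`, `C_{i+1} = 12z²·Cᵢ' − 4iz·Cᵢ`, then each `Cₙ` (for `n ≥ 1`) is a
polynomial in `C` of degree at most `n` with coefficients in `ℚ[z]`. -/
theorem C_n_poly (Cs : PowerSeries ℚ)
    (hC : 12 * PowerSeries.X ^ 2 * PowerSeries.derivative ℚ Cs =
      1 + 4 * PowerSeries.X * Cs - Cs ^ 2)
    (Cn : ℕ → PowerSeries ℚ)
    (h1 : Cn 1 = Cs)
    (hstep : ∀ i : ℕ, 1 ≤ i →
      Cn (i + 1) = 12 * PowerSeries.X ^ 2 * PowerSeries.derivative ℚ (Cn i) -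
        4 * (i : PowerSeries ℚ) * PowerSeries.X * Cn i) :
    ∀ n : ℕ, 1 ≤ n → ∃ f : ℕ → Polynomial ℚ,
      Cn n = ∑ j ∈ Finset.range (n + 1), (f j : PowerSeries ℚ) * Cs ^ j := by
  have h12 (P : ℚ⟦X⟧) : 12 * PowerSeries.X ^ 2 * P = (12 * Polynomial.X ^ 2 : ℚ[X]) • P := by
    simp only [Algebra.smul_def, map_mul, map_pow, map_ofNat, algebraMap_polynomial_X]
  have hRiccati : (12 * Polynomial.X ^ 2 : ℚ[X]) • d⁄dX ℚ Cs ∈ powersSpan Cs 2 := by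
    have h4 : 4 * PowerSeries.X * Cs = (4 * Polynomial.X : ℚ[X]) • Cs := by
      simp only [Algebra.smul_def, map_mul, map_ofNat, algebraMap_polynomial_X]
    rw [← h12, hC, h4]
    refine sub_mem (add_mem ?_ (Submodule.smul_mem _ _ ?_)) (pow_mem_powersSpan le_rfl)
    · simpa using pow_mem_powersSpan (C := Cs) (n := 2) (j := 0) (by norm_num)
    · simpa using pow_mem_powersSpan (C := Cs) (n := 2) (j := 1) (by norm_num)
  have hmem : ∀ n, 1 ≤ n → Cn n ∈ powersSpan Cs n := by
    refine Nat.le_induction (by simpa [h1] using pow_mem_powersSpan (C := Cs) (le_refl 1)) ?_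
    intro i hi ih
    have h4 : 4 * (i : ℚ⟦X⟧) * PowerSeries.X * Cn i = (4 * (i : ℚ[X]) * Polynomial.X) • Cn i := by
      simp only [Algebra.smul_def, map_mul, map_ofNat, map_natCast, algebraMap_polynomial_X]
    rw [hstep i hi, h12, h4]
    exact sub_mem (smul_derivative_mem_powersSpan hRiccati ih)
      (Submodule.smul_mem _ _ (powersSpan_mono Cs i.le_succ ih))
  exact fun n hn => mem_powersSpan_iff.1 (hmem n hn)
end

section
/- For n ≥ 1, writing the result in the variables y = −x/(1+4x) and u^{−1} = √(1+4x)/t, there are rational constants b_j^n with (x·d/dx)^{n−1}((1/(2t))√(1+4x)) = Σ_{j=0}^{n−1} b_j^n u^{−1} y^j, and the top coefficient is b_{n−1}^n = −2^{n−2}·(2n−5)!!, with conventions (−1)!! = 1 and (−3)!! = −1. -/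
open PowerSeries Nat

/-- The Euler operator `x·d/dx`. -/
noncomputable def euler (f : PowerSeries ℚ) : PowerSeries ℚ :=
  PowerSeries.X * PowerSeries.derivative ℚ f

/-- `y = −x/(1+4x)`. -/
noncomputable def yVar : PowerSeries ℚ :=
  -PowerSeries.X * (1 + 4 * PowerSeries.X)⁻¹

/-- `(2n−5)!!` with the conventions `(−1)!! = 1` (at `n = 2`) and `(−3)!! = −1`
(at `n = 1`). -/
noncomputable def df (n : ℕ) : ℚ :=
  if n = 1 then -1 else if n = 2 then 1 else ((2 * n - 5)‼ : ℚ)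

/-- The coefficients `bc m j = bⱼ^{m+1}`. -/
noncomputable def bc : ℕ → ℕ → ℚ
  | 0, 0 => 1/2
  | 0, _+1 => 0
  | _+1, 0 => 0
  | m+1, j+1 => ((j : ℚ) + 1) * bc m (j+1) + (4*(j : ℚ) - 2) * bc m j

lemma bc_succ_succ (m j : ℕ) : bc (m+1) (j+1)
    = ((j : ℚ) + 1) * bc m (j+1) + (4*(j : ℚ) - 2) * bc m j := rfl

lemma bc_eq_zero : ∀ m j, m < j → bc m j = 0 := by
  intro m
  induction m with
  | zero =>
    intro j hj
    match j, hj with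
    | j+1, _ => rfl
  | succ m ih =>
    intro j hj
    match j, hj with
    | j+1, hj =>
      have h1 : bc m (j+1) = 0 := ih _ (by omega)
      have h2 : bc m j = 0 := ih _ (by omega)
      show ((j : ℚ) + 1) * bc m (j+1) + (4*(j : ℚ) - 2) * bc m j = 0
      rw [h1, h2]; ring

lemma df_rec (m : ℕ) (hm : 1 ≤ m) : df (m + 2) = (2 * (m : ℚ) - 1) * df (m + 1) := by
  match m, hm with
  | 1, _ => norm_num [df]
  | (k+2), _ =>
    have h1 : df (k + 4) = (((2*k+3)‼ : ℕ) : ℚ) := by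
      rw [df, if_neg (by omega), if_neg (by omega),
        show 2*(k+4)-5 = 2*k+3 by omega]
    have h2 : df (k + 3) = (((2*k+1)‼ : ℕ) : ℚ) := by
      rw [df, if_neg (by omega), if_neg (by omega),
        show 2*(k+3)-5 = 2*k+1 by omega]
    have h3 : (2*k+3)‼ = (2*k+3) * (2*k+1)‼ := Nat.doubleFactorial_add_two (2*k+1)
    rw [show k + 2 + 2 = k + 4 by ring, show k + 2 + 1 = k + 3 by ring, h1, h2, h3]
    push_cast
    ring

lemma bc_top : ∀ m : ℕ, bc m m = -(2 : ℚ) ^ (((m : ℤ) + 1) - 2) * df (m + 1) := by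
  intro m
  induction m with
  | zero => norm_num [bc, df]
  | succ m ih =>
    cases m with
    | zero =>
      rw [bc_succ_succ]
      norm_num [show bc 0 1 = 0 from rfl, show bc 0 0 = 1/2 from rfl, df]
    | succ k =>
      rw [bc_succ_succ, bc_eq_zero (k+1) (k+2) (by omega), ih,
        df_rec (k+1) (by omega)]
      push_cast
      rw [show ((k:ℤ) + 1 + 1 + 1) - 2 = (((k:ℤ) + 1 + 1) - 2) + 1 by ring,
        zpow_add_one₀ (by norm_num : (2:ℚ) ≠ 0)]
      ring

lemma hAinv : (1 + 4 * X : ℚ⟦X⟧) * (1 + 4 * X)⁻¹ = 1 :=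
  PowerSeries.mul_inv_cancel _ (by simp)

lemma hAne : (1 + 4 * X : ℚ⟦X⟧) ≠ 0 := by
  intro h
  have := congrArg (constantCoeff) h
  simp at this

lemma dA : derivative ℚ (1 + 4 * X : ℚ⟦X⟧) = 4 := by
  rw [show (1 + 4 * X : ℚ⟦X⟧) = 1 + C (4:ℚ) * X by simp [map_ofNat]]
  rw [map_add, Derivation.leibniz]
  simp [map_ofNat]
  rw [show (4 : ℚ⟦X⟧) = ((4:ℕ) : ℚ⟦X⟧) by norm_cast, Derivation.map_natCast]

lemma euler_mul (f g : ℚ⟦X⟧) : euler (f * g) = euler f * g + f * euler g := by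
  unfold euler
  rw [Derivation.leibniz]
  simp only [smul_eq_mul]
  ring

lemma euler_C_mul (a : ℚ) (f : ℚ⟦X⟧) : euler (C a * f) = C a * euler f := by
  rw [euler_mul]
  unfold euler
  simp

lemma euler_sum {s : Finset ℕ} (f : ℕ → ℚ⟦X⟧) :
    euler (∑ j ∈ s, f j) = ∑ j ∈ s, euler (f j) := by
  unfold euler
  rw [map_sum, Finset.mul_sum]

lemma eulerY : euler yVar = yVar + C (4:ℚ) * yVar ^ 2 := by
  have dAinv : derivative ℚ ((1 + 4 * X : ℚ⟦X⟧)⁻¹)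
      = -((1 + 4 * X : ℚ⟦X⟧)⁻¹) ^ 2 * 4 := by
    rw [derivative_inv', dA]
  unfold euler yVar
  rw [Derivation.leibniz, dAinv]
  simp only [smul_eq_mul, map_neg, derivative_X, map_ofNat]
  ring_nf

section WithR

variable {R : ℚ⟦X⟧} (hR0 : PowerSeries.constantCoeff R = 1)
  (hR : R ^ 2 = 1 + 4 * PowerSeries.X)

include hR in
lemma eulerR : euler R = C (-2:ℚ) * (R * yVar) := by
  have hRd : R * derivative ℚ R = 2 := by
    have h := congrArg (derivative ℚ) hR
    rw [dA, pow_two, Derivation.leibniz] at h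
    simp only [smul_eq_mul] at h
    have h2 : (2 : ℚ⟦X⟧) * (R * derivative ℚ R) = 2 * 2 := by
      rw [show ((2:ℚ⟦X⟧) * 2) = 4 by norm_num, ← h]; ring
    have h2ne : (2 : ℚ⟦X⟧) ≠ 0 := by
      intro hc
      have := congrArg (constantCoeff) hc
      rw [map_ofNat, map_zero] at this
      norm_num at this
    exact mul_left_cancel₀ h2ne h2
  unfold euler yVar
  have hC2 : (C (-2:ℚ) : ℚ⟦X⟧) = -2 := by
    rw [map_neg]; norm_num [map_ofNat]
  have lhs : (X * derivative ℚ R) * (1 + 4*X) = 2 * (X * R) := by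
    rw [← hR]
    calc X * derivative ℚ R * R ^ 2 = (R * derivative ℚ R) * (X * R) := by ring
      _ = 2 * (X * R) := by rw [hRd]
  have rhs : (C (-2:ℚ) * (R * (-X * (1 + 4*X)⁻¹))) * (1 + 4*X) = 2 * (X * R) := by
    rw [hC2]
    calc (-2 : ℚ⟦X⟧) * (R * (-X * (1 + 4*X)⁻¹)) * (1 + 4*X)
        = 2 * (X * R) * ((1 + 4*X)⁻¹ * (1 + 4*X)) := by ring
      _ = 2 * (X * R) := by
          rw [mul_comm ((1 + 4*X : ℚ⟦X⟧)⁻¹), hAinv, mul_one]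
  exact mul_right_cancel₀ hAne (lhs.trans rhs.symm)

include hR in
lemma eulerRY (j : ℕ) : euler (R * yVar ^ j)
    = C (j : ℚ) * (R * yVar ^ j) + C (4*(j:ℚ) - 2) * (R * yVar ^ (j+1)) := by
  induction j with
  | zero =>
    simp only [pow_zero, mul_one, Nat.cast_zero, map_zero, zero_mul, zero_add, pow_one]
    rw [eulerR hR]
    rw [show (4*(0:ℚ) - 2) = -2 by norm_num]
  | succ j ih =>
    have : R * yVar ^ (j+1) = (R * yVar ^ j) * yVar := by ring
    rw [this, euler_mul, ih, eulerY]
    push_cast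
    simp only [map_add, map_sub, map_mul, map_one, map_ofNat]
    ring

include hR in
lemma main_ind : ∀ m : ℕ, euler^[m] (C (1/2:ℚ) * R)
    = R * ∑ j ∈ Finset.range (m+1), C (bc m j) * yVar ^ j := by
  intro m
  induction m with
  | zero =>
    simp [show bc 0 0 = 1/2 from rfl]
    ring
  | succ m ih =>
    rw [Function.iterate_succ_apply', ih]
    have expand : R * ∑ j ∈ Finset.range (m+1), C (bc m j) * yVar ^ j
        = ∑ j ∈ Finset.range (m+1), C (bc m j) * (R * yVar ^ j) := by
      rw [Finset.mul_sum]
      exact Finset.sum_congr rfl (fun j _ => by ring)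
    rw [expand, euler_sum]
    have step : ∀ j ∈ Finset.range (m+1),
        euler (C (bc m j) * (R * yVar ^ j))
        = C ((j:ℚ) * bc m j) * (R * yVar ^ j)
          + C ((4*(j:ℚ) - 2) * bc m j) * (R * yVar ^ (j+1)) := by
      intro j _
      rw [euler_C_mul, eulerRY hR]
      simp only [map_mul]
      ring
    rw [Finset.sum_congr rfl step, Finset.sum_add_distrib]
    -- RHS
    have hRHS : R * ∑ j ∈ Finset.range (m+2), C (bc (m+1) j) * yVar ^ j
        = ∑ j ∈ Finset.range (m+1), C (((j:ℚ)+1) * bc m (j+1)) * (R * yVar ^ (j+1))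
          + ∑ j ∈ Finset.range (m+1), C ((4*(j:ℚ) - 2) * bc m j) * (R * yVar ^ (j+1)) := by
      rw [Finset.mul_sum, Finset.sum_range_succ']
      have h0 : C (bc (m+1) 0) = 0 := by
        rw [show bc (m+1) 0 = 0 from rfl, map_zero]
      rw [h0]
      simp only [zero_mul, mul_zero, add_zero]
      rw [← Finset.sum_add_distrib]
      refine Finset.sum_congr rfl (fun j _ => ?_)
      show R * (C (((j:ℚ)+1) * bc m (j+1) + (4*(j:ℚ) - 2) * bc m j) * yVar ^ (j+1)) = _
      rw [map_add]
      ring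
    rw [hRHS]
    congr 1
    -- shifted sum equality
    have key : ∑ j ∈ Finset.range (m+1), C ((j:ℚ) * bc m j) * (R * yVar ^ j)
        = ∑ j ∈ Finset.range (m+1), C (((j:ℚ)+1) * bc m (j+1)) * (R * yVar ^ (j+1)) := by
      have e1 : ∑ j ∈ Finset.range (m+2), C ((j:ℚ) * bc m j) * (R * yVar ^ j)
          = ∑ j ∈ Finset.range (m+1), C ((j:ℚ) * bc m j) * (R * yVar ^ j) := by
        rw [Finset.sum_range_succ, bc_eq_zero m (m+1) (by omega)]
        simp
      have e2 : ∑ j ∈ Finset.range (m+2), C ((j:ℚ) * bc m j) * (R * yVar ^ j)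
          = ∑ j ∈ Finset.range (m+1), C (((j:ℚ)+1) * bc m (j+1)) * (R * yVar ^ (j+1)) := by
        rw [Finset.sum_range_succ']
        push_cast
        simp
      rw [← e1, e2]
    exact key

end WithR

/-- For `n ≥ 1`, `(x d/dx)^{n−1}((1/(2t))√(1+4x)) = Σ_{j=0}^{n−1} bⱼⁿ u^{−1} yʲ`
with `b_{n−1}ⁿ = −2^{n−2}(2n−5)!!`.  Since `u^{−1} = √(1+4x)/t`, the `t`'s cancel and
the identity reads `(x d/dx)^{n−1}((1/2)·R) = R · Σ_{j<n} bⱼ yʲ` where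
`R = √(1+4x)` is the formal square root with constant term `1`. -/
theorem euler_sqrt (n : ℕ) (hn : 1 ≤ n) (R : PowerSeries ℚ)
    (hR0 : PowerSeries.constantCoeff R = 1)
    (hR : R ^ 2 = 1 + 4 * PowerSeries.X) :
    ∃ b : ℕ → ℚ,
      euler^[n - 1] (PowerSeries.C (1 / 2 : ℚ) * R) =
        R * ∑ j ∈ Finset.range n, PowerSeries.C (b j) * yVar ^ j ∧
      b (n - 1) = -(2 : ℚ) ^ ((n : ℤ) - 2) * df n := by
  obtain ⟨m, rfl⟩ : ∃ m, n = m + 1 := ⟨n - 1, by omega⟩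
  refine ⟨bc m, ?_, ?_⟩
  · simpa using main_ind hR m
  · simpa [show m + 1 - 1 = m by omega] using bc_top m
end

section
/- The function Σ_{i≥0} ((6i)!/((3i)!(2i)!(2i+1)!!))·(t²/216)^i equals (3/(2t))·sin((2/3)·arcsin(t)) as a power series identity in t. -/
open Nat

open Real Set

/-!
For |α| ≤ 1, sin(α·arcsin t) = Σ aₙ tⁿ with a₀ = 0, a₁ = α and (n+1)(n+2)aₙ₊₂ = (n² − α²)aₙ.
For α = 2/3 the ratio of consecutive odd coefficients, ((2i+1)² − 4/9)/((2i+2)(2i+3)), is also the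
ratio of consecutive terms of (2/3)·(6i)!/((3i)!(2i)!(2i+1)!!·216ⁱ), which gives the closed form.

To prove the expansion put t = sin θ. Differentiating F(θ) = Σ aₙ sinⁿθ twice termwise gives
Σ aₙ (n(n−1) sinⁿ⁻²θ − n² sinⁿθ), which the recurrence turns into −α²F. So F and sin(αθ) solve
u'' = −α²u with the same initial data, and the energy u'² + α²u² of their difference is constant,
hence zero.
-/

noncomputable def sinArcsinCoeff (α : ℝ) : ℕ → ℝ
  | 0 => 0
  | 1 => α
  | n + 2 => (n ^ 2 - α ^ 2) / ((n + 1) * (n + 2)) * sinArcsinCoeff α n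

namespace sinArcsinCoeff

variable (α : ℝ)

theorem recurrence (n : ℕ) :
    ((n : ℝ) + 1) * (n + 2) * sinArcsinCoeff α (n + 2) = (n ^ 2 - α ^ 2) * sinArcsinCoeff α n := by
  rw [sinArcsinCoeff]
  field_simp

theorem two_mul (i : ℕ) : sinArcsinCoeff α (2 * i) = 0 := by
  induction i with
  | zero => rfl
  | succ i ih => rw [show 2 * (i + 1) = 2 * i + 2 by ring, sinArcsinCoeff, ih, mul_zero]

variable {α}

theorem abs_le_one (hα : |α| ≤ 1) (n : ℕ) : |sinArcsinCoeff α n| ≤ 1 := by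
  induction n using Nat.twoStepInduction with
  | zero => simp [sinArcsinCoeff]
  | one => simpa [sinArcsinCoeff] using hα
  | more n ih _ =>
    have hα2 : α ^ 2 ≤ 1 := by nlinarith [sq_abs α, abs_nonneg α]
    have hn : (0 : ℝ) ≤ n := n.cast_nonneg
    have hratio : |((n : ℝ) ^ 2 - α ^ 2) / ((n + 1) * (n + 2))| ≤ 1 := by
      have hpos : (0 : ℝ) < (n + 1) * (n + 2) := by positivity
      rw [abs_div, abs_of_pos hpos, div_le_one hpos, abs_le]
      constructor <;> nlinarith [sq_nonneg α]
    rw [sinArcsinCoeff, abs_mul]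
    exact mul_le_one₀ hratio (abs_nonneg _) ih

theorem two_thirds_two_mul_add_one (i : ℕ) :
    sinArcsinCoeff (2 / 3) (2 * i + 1) =
      2 / 3 * (6 * i)! / (216 ^ i * (3 * i)! * (2 * i)! * (2 * i + 1)‼) := by
  induction i with
  | zero => simp [sinArcsinCoeff]
  | succ i ih =>
    rw [show 2 * (i + 1) + 1 = 2 * i + 1 + 2 by ring, sinArcsinCoeff, ih,
      show 6 * (i + 1) = 6 * i + 6 by ring, show 3 * (i + 1) = 3 * i + 3 by ring,
      show 2 * (i + 1) = 2 * i + 2 by ring, Nat.doubleFactorial_add_two]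
    simp only [Nat.factorial_succ, pow_succ]
    push_cast
    field_simp
    ring

end sinArcsinCoeff

theorem summable_natCast_pow_mul_pow_sub {r : ℝ} (hr0 : 0 < r) (hr1 : r < 1) (k m : ℕ) :
    Summable fun n : ℕ => (n : ℝ) ^ k * r ^ (n - m) := by
  refine ((summable_pow_mul_geometric_of_norm_lt_one (R := ℝ) k
    (by rwa [norm_of_nonneg hr0.le])).div_const (r ^ m)).of_nonneg_of_le
    (fun n => by positivity) (fun n => ?_)
  rw [mul_div_assoc]
  gcongr
  rw [le_div_iff₀ (by positivity), ← pow_add]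
  exact pow_le_pow_of_le_one hr0.le hr1.le (by omega)

theorem summable_mul_natCast_pow_mul_pow {a : ℕ → ℝ} (ha : ∀ n, |a n| ≤ 1) {x : ℝ} (hx : |x| < 1)
    (k : ℕ) : Summable fun n : ℕ => a n * (n : ℝ) ^ k * x ^ n := by
  refine .of_norm_bounded (summable_pow_mul_geometric_of_norm_lt_one (R := ℝ) k
    (by rwa [norm_abs_eq_norm])) (fun n => ?_)
  rw [norm_mul, norm_mul, norm_pow, norm_pow, Real.norm_natCast, Real.norm_eq_abs,
    Real.norm_eq_abs]
  calc |a n| * (n : ℝ) ^ k * |x| ^ n ≤ 1 * (n : ℝ) ^ k * |x| ^ n := by gcongr; exact ha n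
    _ = _ := by ring

theorem summable_mul_pow {a : ℕ → ℝ} (ha : ∀ n, |a n| ≤ 1) {x : ℝ} (hx : |x| < 1) :
    Summable fun n : ℕ => a n * x ^ n := by
  simpa using summable_mul_natCast_pow_mul_pow ha hx 0

theorem abs_sin_le_sin_of_abs_le {y ρ : ℝ} (hy : |y| ≤ ρ) (hρ : ρ ≤ π / 2) : |sin y| ≤ sin ρ := by
  rw [abs_sin_eq_sin_abs_of_abs_le_pi (by linarith [pi_pos])]
  exact sin_le_sin_of_le_of_le_pi_div_two (by linarith [abs_nonneg y, pi_pos]) hρ hy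

theorem IsOpen.eqOn_zero_of_oscillator {s : Set ℝ} (hs : IsOpen s) (hs' : IsPreconnected s)
    {u u' : ℝ → ℝ} {ω x₀ : ℝ} (hu : ∀ x ∈ s, HasDerivAt u (u' x) x)
    (hu' : ∀ x ∈ s, HasDerivAt u' (-ω ^ 2 * u x) x) (hx₀ : x₀ ∈ s) (h₀ : u x₀ = 0)
    (h₀' : u' x₀ = 0) : EqOn u 0 s := by
  have henergy : ∀ x ∈ s, HasDerivAt (fun y => u' y ^ 2 + ω ^ 2 * u y ^ 2) 0 x := fun x hx => by
    refine (((hu' x hx).pow 2).add (((hu x hx).pow 2).const_mul (ω ^ 2))).congr_deriv ?_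
    simp only [Nat.add_one_sub_one, pow_one]
    ring
  have hu'_zero : ∀ x ∈ s, u' x = 0 := fun x hx => by
    have h := hs.is_const_of_deriv_eq_zero hs'
      (fun y hy => (henergy y hy).differentiableAt.differentiableWithinAt)
      (fun y hy => (henergy y hy).deriv) hx hx₀
    simp only [h₀, h₀'] at h
    nlinarith [sq_nonneg (u' x), sq_nonneg (ω * u x)]
  intro x hx
  exact (hs.is_const_of_deriv_eq_zero hs'
    (fun y hy => (hu y hy).differentiableAt.differentiableWithinAt)
    (fun y hy => (hu y hy).deriv.trans (hu'_zero y hy)) hx hx₀).trans h₀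

-- The exponents `n - 1` and `n - 2` truncate at `0`, where their coefficients vanish.
noncomputable def sinPowDeriv (n : ℕ) (x : ℝ) : ℝ := n * sin x ^ (n - 1) * cos x

noncomputable def sinPowDeriv2 (n : ℕ) (x : ℝ) : ℝ :=
  n * (n - 1) * sin x ^ (n - 2) - n ^ 2 * sin x ^ n

theorem hasDerivAt_sinPowDeriv (n : ℕ) (x : ℝ) :
    HasDerivAt (sinPowDeriv n) (sinPowDeriv2 n x) x := by
  rcases n with _ | _ | n
  all_goals unfold sinPowDeriv sinPowDeriv2
  · simpa using hasDerivAt_const x (0 : ℝ)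
  · simpa using hasDerivAt_cos x
  · refine ((((hasDerivAt_sin x).pow (n + 1)).const_mul ((n + 2 : ℕ) : ℝ)).mul
      (hasDerivAt_cos x)).congr_deriv ?_
    rw [show n + 1 + 1 - 2 = n by omega, Pi.pow_apply]
    push_cast
    linear_combination ((n + 2) * (n + 1) * sin x ^ n) * sin_sq_add_cos_sq x

theorem abs_sinPowDeriv_le {x r : ℝ} (hx : |sin x| ≤ r) (n : ℕ) :
    |sinPowDeriv n x| ≤ n * r ^ (n - 1) := by
  have hr : 0 ≤ r := (abs_nonneg _).trans hx
  rw [sinPowDeriv, abs_mul, abs_mul, abs_pow, Nat.abs_cast, ← mul_one ((n : ℝ) * r ^ (n - 1))]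
  exact mul_le_mul (by gcongr) (abs_cos_le_one x) (abs_nonneg _) (by positivity)

theorem abs_sinPowDeriv2_le {x r : ℝ} (hx : |sin x| ≤ r) (n : ℕ) :
    |sinPowDeriv2 n x| ≤ n ^ 2 * r ^ (n - 2) + n ^ 2 * r ^ n := by
  have hn : 0 ≤ (n : ℝ) * (n - 1) ∧ (n : ℝ) * (n - 1) ≤ n ^ 2 := by
    rcases n with _ | n
    · simp
    · push_cast
      constructor <;> nlinarith [n.cast_nonneg (α := ℝ)]
  calc |sinPowDeriv2 n x|
      ≤ n * (n - 1) * |sin x| ^ (n - 2) + n ^ 2 * |sin x| ^ n := by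
        rw [sinPowDeriv2]
        refine (abs_sub _ _).trans_eq ?_
        rw [abs_mul (_ * _), abs_of_nonneg hn.1, abs_mul (_ ^ 2), abs_pow, abs_pow, abs_pow,
          Nat.abs_cast]
    _ ≤ n ^ 2 * r ^ (n - 2) + n ^ 2 * r ^ n := by
        have hr : 0 ≤ r := (abs_nonneg _).trans hx
        gcongr
        exact hn.2

theorem hasDerivAt_tsum_mul_of_isPreconnected {a : ℕ → ℝ} (ha : ∀ n, |a n| ≤ 1)
    {f f' : ℕ → ℝ → ℝ} {u : ℕ → ℝ} {s : Set ℝ} (hu : Summable u) (hs : IsOpen s)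
    (hs' : IsPreconnected s) (hf : ∀ n, ∀ x ∈ s, HasDerivAt (f n) (f' n x) x)
    (hf' : ∀ n, ∀ x ∈ s, |f' n x| ≤ u n) {y : ℝ} (hy : y ∈ s)
    (hfy : Summable fun n => a n * f n y) :
    HasDerivAt (fun x => ∑' n, a n * f n x) (∑' n, a n * f' n y) y :=
  hasDerivAt_tsum_of_isPreconnected hu hs hs' (fun n x hx => (hf n x hx).const_mul (a n))
    (fun n x hx => by
      rw [Real.norm_eq_abs, abs_mul]
      exact (mul_le_of_le_one_left (abs_nonneg _) (ha n)).trans (hf' n x hx))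
    hy hfy hy

theorem hasSum_mul_sinPowDeriv2 {a : ℕ → ℝ} {α : ℝ} (ha : ∀ n, |a n| ≤ 1)
    (hrec : ∀ n : ℕ, ((n : ℝ) + 1) * (n + 2) * a (n + 2) = (n ^ 2 - α ^ 2) * a n)
    {x : ℝ} (hx : |sin x| < 1) :
    HasSum (fun n => a n * sinPowDeriv2 n x) (-α ^ 2 * ∑' n, a n * sin x ^ n) := by
  have hA := (summable_mul_pow ha hx).hasSum
  obtain ⟨B, hB⟩ := summable_mul_natCast_pow_mul_pow ha hx 2
  have hshift : HasSum (fun n : ℕ => a (n + 2) * ((n + 2) * (n + 1)) * sin x ^ n)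
      (B - α ^ 2 * ∑' n, a n * sin x ^ n) :=
    (hB.sub (hA.mul_left (α ^ 2))).congr_fun fun n => by linear_combination sin x ^ n * hrec n
  have hfirst : HasSum (fun n => a n * (n * (n - 1)) * sin x ^ (n - 2))
      (B - α ^ 2 * ∑' n, a n * sin x ^ n) := by
    rw [← hasSum_nat_add_iff' 2]
    norm_num [Finset.sum_range_succ, add_sub_assoc]
    exact hshift
  have h := hfirst.sub hB
  rw [show ∀ S : ℝ, B - α ^ 2 * S - B = -α ^ 2 * S from fun S => by ring] at h
  exact h.congr_fun fun n => by rw [sinPowDeriv2]; ring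

section SinBounded

variable {a : ℕ → ℝ} {s : Set ℝ} {r : ℝ}

theorem hasDerivAt_tsum_mul_sin_pow (ha : ∀ n, |a n| ≤ 1) (hs : IsOpen s)
    (hs' : IsPreconnected s) (hr0 : 0 < r) (hr1 : r < 1) (hsin : ∀ y ∈ s, |sin y| ≤ r) {y : ℝ}
    (hy : y ∈ s) :
    HasDerivAt (fun x => ∑' n, a n * sin x ^ n) (∑' n, a n * sinPowDeriv n y) y :=
  hasDerivAt_tsum_mul_of_isPreconnected (f' := sinPowDeriv) ha
    (summable_natCast_pow_mul_pow_sub hr0 hr1 1 1) hs hs' (fun n x _ => (hasDerivAt_sin x).pow n)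
    (fun n x hx => by simpa using abs_sinPowDeriv_le (hsin x hx) n) hy
    (summable_mul_pow ha ((hsin y hy).trans_lt hr1))

theorem hasDerivAt_tsum_mul_sinPowDeriv (ha : ∀ n, |a n| ≤ 1) (hs : IsOpen s)
    (hs' : IsPreconnected s) (hr0 : 0 < r) (hr1 : r < 1) (hsin : ∀ y ∈ s, |sin y| ≤ r) {y : ℝ}
    (hy : y ∈ s) :
    HasDerivAt (fun x => ∑' n, a n * sinPowDeriv n x) (∑' n, a n * sinPowDeriv2 n y) y :=
  hasDerivAt_tsum_mul_of_isPreconnected ha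
    ((summable_natCast_pow_mul_pow_sub hr0 hr1 2 2).add
      (by simpa using summable_natCast_pow_mul_pow_sub hr0 hr1 2 0))
    hs hs' (fun n x _ => hasDerivAt_sinPowDeriv n x)
    (fun n x hx => abs_sinPowDeriv2_le (hsin x hx) n) hy
    (.of_norm_bounded (summable_natCast_pow_mul_pow_sub hr0 hr1 1 1) fun n => by
      simpa using (mul_le_of_le_one_left (abs_nonneg _) (ha n)).trans
        (abs_sinPowDeriv_le (hsin y hy) n))

end SinBounded

theorem hasSum_sinArcsinCoeff_mul_sin_pow {α : ℝ} (hα : |α| ≤ 1) {θ : ℝ} (hθ : |θ| < π / 2) :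
    HasSum (fun n => sinArcsinCoeff α n * sin θ ^ n) (sin (α * θ)) := by
  set a := sinArcsinCoeff α
  have ha := sinArcsinCoeff.abs_le_one hα
  obtain ⟨ρ, hθρ, hρ⟩ := exists_between hθ
  have hρ0 : 0 < ρ := (abs_nonneg θ).trans_lt hθρ
  have hr0 : 0 < sin ρ := sin_pos_of_pos_of_lt_pi hρ0 (by linarith [pi_pos])
  have hr1 : sin ρ < 1 := by
    simpa using sin_lt_sin_of_lt_of_le_pi_div_two (by linarith) le_rfl hρ
  have hsin : ∀ y ∈ Ioo (-ρ) ρ, |sin y| ≤ sin ρ := fun y hy =>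
    abs_sin_le_sin_of_abs_le (abs_lt.2 hy).le hρ.le
  have hF'' (y : ℝ) (hy : y ∈ Ioo (-ρ) ρ) :
      HasDerivAt (fun x => ∑' n, a n * sinPowDeriv n x) (-α ^ 2 * ∑' n, a n * sin y ^ n) y := by
    rw [← (hasSum_mul_sinPowDeriv2 ha (sinArcsinCoeff.recurrence α)
      ((hsin y hy).trans_lt hr1)).tsum_eq]
    exact hasDerivAt_tsum_mul_sinPowDeriv ha isOpen_Ioo isPreconnected_Ioo hr0 hr1 hsin hy
  have hsinα (y : ℝ) : HasDerivAt (fun x => sin (α * x)) (α * cos (α * y)) y :=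
    ((hasDerivAt_id y).const_mul α).sin.congr_deriv (by simp [mul_comm])
  have hcosα (y : ℝ) : HasDerivAt (fun x => α * cos (α * x)) (-α ^ 2 * sin (α * y)) y :=
    (((hasDerivAt_id y).const_mul α).cos.const_mul α).congr_deriv (by simp; ring)
  have hzero := IsOpen.eqOn_zero_of_oscillator isOpen_Ioo isPreconnected_Ioo
    (fun y hy => (hasDerivAt_tsum_mul_sin_pow ha isOpen_Ioo isPreconnected_Ioo hr0 hr1 hsin
      hy).sub (hsinα y))
    (fun y hy => ((hF'' y hy).sub (hcosα y)).congr_deriv (by simp only [Pi.sub_apply]; ring))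
    (x₀ := 0) ⟨by linarith, hρ0⟩ ?_ ?_
  · have hθ' := hzero (abs_lt.1 hθρ)
    rw [Pi.sub_apply, Pi.zero_apply, sub_eq_zero] at hθ'
    rw [← hθ']
    exact (summable_mul_pow ha ((hsin θ (abs_lt.1 hθρ)).trans_lt hr1)).hasSum
  · rw [Pi.sub_apply, tsum_eq_single 0 fun n hn => by simp [hn]]
    simp [sinArcsinCoeff]
  · rw [tsum_eq_single 1 fun n hn => by rcases n with _ | _ | n <;> simp_all [sinPowDeriv]]
    simp [sinArcsinCoeff, sinPowDeriv]

theorem hasSum_sinArcsinCoeff_odd_mul_pow {α : ℝ} (hα : |α| ≤ 1) {t : ℝ} (ht : |t| < 1) :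
    HasSum (fun i => sinArcsinCoeff α (2 * i + 1) * t ^ (2 * i + 1)) (sin (α * arcsin t)) := by
  obtain ⟨ht₁, ht₂⟩ := abs_lt.1 ht
  have h := hasSum_sinArcsinCoeff_mul_sin_pow hα
    (abs_lt.2 ⟨neg_pi_div_two_lt_arcsin.2 ht₁, arcsin_lt_pi_div_two.2 ht₂⟩)
  simp only [sin_arcsin ht₁.le ht₂.le] at h
  refine (Function.Injective.hasSum_iff (f := fun n => sinArcsinCoeff α n * t ^ n)
    (g := fun i => 2 * i + 1) (fun i j hij => by simp at hij; omega) fun n hn => ?_).2 h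
  obtain ⟨i, rfl | rfl⟩ := n.even_or_odd'
  · rw [sinArcsinCoeff.two_mul, zero_mul]
  · exact absurd (Set.mem_range_self i) hn

/-- `Σ_{i≥0} ((6i)!/((3i)!(2i)!(2i+1)!!))·(t²/216)^i = (3/(2t))·sin((2/3)·arcsin t)`
for `|t| < 1`, with the right side extended to `t = 0` by its limit `1`. -/
theorem sine_identity (t : ℝ) (ht : |t| < 1) :
    HasSum
      (fun i : ℕ =>
        ((6 * i).factorial : ℝ) /
            (((3 * i).factorial : ℝ) * ((2 * i).factorial : ℝ) * ((2 * i + 1)‼ : ℝ)) *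
          (t ^ 2 / 216) ^ i)
      (if t = 0 then 1 else 3 / (2 * t) * Real.sin (2 / 3 * Real.arcsin t)) := by
  split_ifs with ht0
  · subst ht0
    convert hasSum_single 0 fun i hi => ?_ using 1
    · simp
    · simp [hi]
  · have h := (hasSum_sinArcsinCoeff_odd_mul_pow (α := 2 / 3) (by norm_num [abs_of_pos]) ht).mul_left
      (3 / (2 * t))
    refine h.congr_fun fun i => ?_
    rw [sinArcsinCoeff.two_thirds_two_mul_add_one, div_pow, ← pow_mul]
    field_simp
    ring
end
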